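/- arXiv:2305.02304 — 3 statements merged into one kernel-verified Lean document; each statement's English description precedes it below -/
import Mathlib

section
/- Let K be a symmetric positive definite n×n real matrix, y ∈ {-1,1}^n, and z = K⁻¹y. For each i, let z^{(i)} ∈ ℝ^{n} be the vector supported off coordinate i given by interpolating the leave-one-out data: z^{(i)}_j for j ≠ i solves (K_{\setminus i}) z^{(i)}_{\setminus i} = y_{\setminus i} where K_{\setminus i} is K with the i-th row and column removed. Define η̂_{\setminus i}(x_i) := Σ_{j≠i} z^{(i)}_j K_{ij}. Then z_i y_i > 0 if and only if y_i η̂_{\setminus i}(x_i) < 1. -/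
/-!
Write `η = K *ᵥ zi` for the leave-one-out prediction. Since `zi` interpolates every label except
the `i`-th, `y = K *ᵥ zi + (yᵢ - ηᵢ) • eᵢ`, hence `z = zi + (yᵢ - ηᵢ) • K⁻¹ eᵢ` and, as `ziᵢ = 0`,
`zᵢ = (yᵢ - ηᵢ) (K⁻¹)ᵢᵢ`. With `yᵢ² = 1` this gives `zᵢ yᵢ = (1 - yᵢ ηᵢ) (K⁻¹)ᵢᵢ`, and
`(K⁻¹)ᵢᵢ > 0` because `K⁻¹` is positive definite.
-/

open Matrix

namespace Matrix

variable {ι R : Type*} [Fintype ι] [DecidableEq ι] [CommRing R]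

theorem eq_mulVec_add_single_of_leaveOneOut {K : Matrix ι ι R} {y v : ι → R} {i : ι}
    (hv : ∀ j, j ≠ i → (K *ᵥ v) j = y j) :
    y = K *ᵥ v + Pi.single i (y i - (K *ᵥ v) i) := by
  funext j
  by_cases hj : j = i
  · subst hj
    simp
  · simp [hj, hv j hj]

theorem inv_mulVec_apply_of_leaveOneOut {K : Matrix ι ι R} (hK : IsUnit K)
    {y v : ι → R} {i : ι} (hvi : v i = 0) (hv : ∀ j, j ≠ i → (K *ᵥ v) j = y j) :
    (K⁻¹ *ᵥ y) i = (y i - (K *ᵥ v) i) * K⁻¹ i i := by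
  nth_rw 1 [eq_mulVec_add_single_of_leaveOneOut hv]
  rw [mulVec_add, mulVec_mulVec, nonsing_inv_mul K ((isUnit_iff_isUnit_det K).mp hK), one_mulVec,
    Pi.add_apply, hvi, zero_add]
  simp [mul_comm]

end Matrix

theorem stmt_1_general {n : ℕ} (K : Matrix (Fin n) (Fin n) ℝ)
    (hKpd : K.PosDef) (y : Fin n → ℝ) (hy : ∀ i, y i = 1 ∨ y i = -1)
    (z : Fin n → ℝ) (hz : z = K⁻¹ *ᵥ y) (i : Fin n)
    (zi : Fin n → ℝ) (hzi0 : zi i = 0)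
    (hzint : ∀ j, j ≠ i → (K *ᵥ zi) j = y j) :
    z i * y i > 0 ↔ y i * (K *ᵥ zi) i < 1 := by
  have hdiag : 0 < K⁻¹ i i := hKpd.inv.diag_pos
  have hyi : y i * y i = 1 := by rcases hy i with h | h <;> rw [h] <;> norm_num
  have hzi : z i * y i = (1 - y i * (K *ᵥ zi) i) * K⁻¹ i i := by
    rw [hz, inv_mulVec_apply_of_leaveOneOut hKpd.isUnit hzi0 hzint]
    linear_combination K⁻¹ i i * hyi
  rw [hzi, gt_iff_lt, mul_pos_iff_of_pos_right hdiag, sub_pos]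

/-- With `K` symmetric positive definite, `y ∈ {-1,1}ⁿ`, `z = K⁻¹y`, and
`zi` the leave-one-out interpolating coefficient vector (supported off coordinate `i`,
interpolating the labels `y j` for `j ≠ i`), we have `zᵢyᵢ > 0 ↔ yᵢ η̂₋ᵢ(xᵢ) < 1` where
`η̂₋ᵢ(xᵢ) = ∑_{j≠i} zi_j K_{ij} = (K *ᵥ zi) i`. -/
theorem stmt_1 {n : ℕ} (K : Matrix (Fin n) (Fin n) ℝ) (hKsym : K.IsSymm)
    (hKpd : K.PosDef) (y : Fin n → ℝ) (hy : ∀ i, y i = 1 ∨ y i = -1)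
    (z : Fin n → ℝ) (hz : z = K⁻¹ *ᵥ y) (i : Fin n)
    (zi : Fin n → ℝ) (hzi0 : zi i = 0)
    (hzint : ∀ j, j ≠ i → (K *ᵥ zi) j = y j) :
    z i * y i > 0 ↔ y i * (K *ᵥ zi) i < 1 :=
  stmt_1_general K hKpd y hy z hz i zi hzi0 hzint
end

section
/- Let A, B be symmetric positive definite n×n matrices with α_L I ⪯ B ⪯ α_U I, and let ᾱ = (α_L + α_U)/2. Then ‖(A + B)⁻¹ (A + ᾱ I)‖_op ≤ (1/2)(α_U/α_L + 1). -/
/-!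
Write `ᾱ = (α_L + α_U)/2` and `d = (α_U - α_L)/2`. Then
`(A + B)⁻¹ (A + ᾱ I) = I + (A + B)⁻¹ (ᾱ I - B)`. Since `A + B ⪰ α_L I`, the inverse has norm at
most `1/α_L`, and `-d I ⪯ ᾱ I - B ⪯ d I` bounds the symmetric operator `ᾱ I - B` by `d`, so the
norm is at most `1 + d/α_L = (α_U/α_L + 1)/2`. The argument works for operators on any real or
complex inner product space; the matrix statement is its image under `Matrix.toEuclideanCLM`.
-/

open Matrix

namespace ContinuousLinearMap

open RCLike
open scoped InnerProductSpace

variable {𝕜 E : Type*} [RCLike 𝕜] [NormedAddCommGroup E] [InnerProductSpace 𝕜 E]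

lemma re_inner_smul_one_apply (c : ℝ) (x : E) :
    re ⟪((c : 𝕜) • (1 : E →L[𝕜] E)) x, x⟫_𝕜 = c * ‖x‖ ^ 2 := by
  rw [_root_.smul_apply, one_apply_eq_self, inner_smul_left, conj_ofReal, re_ofReal_mul,
    inner_self_eq_norm_sq]

lemma norm_le_of_neg_smul_one_le_of_le_smul_one {c : ℝ} (hc : 0 ≤ c) {T : E →L[𝕜] E}
    (hlow : -((c : 𝕜) • 1) ≤ T) (hup : T ≤ (c : 𝕜) • 1) : ‖T‖ ≤ c := by
  have hsymm : T.IsSymmetric := fun x y => by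
    simpa [inner_add_left, inner_add_right, inner_smul_left, inner_smul_right]
      using hlow.isSymmetric x y
  have hquad : ∀ x, |re ⟪T x, x⟫_𝕜| ≤ c * ‖x‖ ^ 2 := by
    intro x
    have h₁ := hlow.re_inner_nonneg_left x
    have h₂ := hup.re_inner_nonneg_left x
    rw [_root_.sub_apply, inner_sub_left, map_sub, re_inner_smul_one_apply] at h₂
    rw [_root_.sub_apply, inner_sub_left, map_sub, _root_.neg_apply, inner_neg_left, map_neg,
      re_inner_smul_one_apply] at h₁
    exact abs_le.mpr ⟨by linarith, by linarith⟩
  rw [T.norm_eq_iSup_rayleighQuotient hsymm]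
  refine ciSup_le fun x => ?_
  rw [abs_div, abs_sq]
  exact div_le_of_le_mul₀ (by positivity) hc (hquad x)

lemma norm_le_inv_of_smul_one_le {a : ℝ} (ha : 0 < a) {T S : E →L[𝕜] E}
    (hT : (a : 𝕜) • 1 ≤ T) (hTS : T * S = 1) : ‖S‖ ≤ a⁻¹ := by
  refine opNorm_le_bound _ (inv_nonneg.mpr ha.le) fun y => ?_
  set x := S y
  have hTx : T x = y := by rw [← mul_apply_eq_comp, hTS, one_apply_eq_self]
  have hcoercive : a * ‖x‖ ^ 2 ≤ ‖y‖ * ‖x‖ := by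
    have h := hT.re_inner_nonneg_left x
    rw [_root_.sub_apply, inner_sub_left, map_sub, re_inner_smul_one_apply, hTx, sub_nonneg] at h
    exact h.trans ((re_le_norm _).trans (norm_inner_le_norm _ _))
  rw [inv_mul_eq_div, le_div_iff₀ ha]
  rcases (norm_nonneg x).eq_or_lt with hx | hx
  · rw [← hx, zero_mul]; exact norm_nonneg y
  · nlinarith

theorem norm_mul_add_smul_one_le {αL αU : ℝ} (hαL : 0 < αL) (hαLU : αL ≤ αU)
    {A B R : E →L[𝕜] E} (hA : 0 ≤ A) (hlow : (αL : 𝕜) • 1 ≤ B) (hup : B ≤ (αU : 𝕜) • 1)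
    (hRl : R * (A + B) = 1) (hRr : (A + B) * R = 1) :
    ‖R * (A + (((αL + αU) / 2 : ℝ) : 𝕜) • 1)‖ ≤ 1 / 2 * (αU / αL + 1) := by
  set S : E →L[𝕜] E := (((αL + αU) / 2 : ℝ) : 𝕜) • 1 - B with hS_def
  have hsplit : R * (A + (((αL + αU) / 2 : ℝ) : 𝕜) • 1) = 1 + R * S := by
    rw [show A + (((αL + αU) / 2 : ℝ) : 𝕜) • 1 = (A + B) + S by rw [hS_def]; abel, mul_add, hRl]
  have hR : ‖R‖ ≤ αL⁻¹ := by
    refine norm_le_inv_of_smul_one_le hαL ?_ hRr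
    rw [le_def, add_sub_assoc]
    simpa using hA.add hlow
  have hS : ‖S‖ ≤ (αU - αL) / 2 := by
    refine norm_le_of_neg_smul_one_le_of_le_smul_one (by linarith) ?_ ?_
    · rw [le_def]
      convert (le_def _ _).mp hup using 1
      push_cast
      module
    · rw [le_def]
      convert (le_def _ _).mp hlow using 1
      push_cast
      module
  calc ‖R * (A + (((αL + αU) / 2 : ℝ) : 𝕜) • 1)‖ = ‖1 + R * S‖ := by rw [hsplit]
    _ ≤ ‖(1 : E →L[𝕜] E)‖ + ‖R‖ * ‖S‖ := norm_add_le_of_le le_rfl (norm_mul_le _ _)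
    _ ≤ 1 + αL⁻¹ * ((αU - αL) / 2) :=
      add_le_add norm_id_le (mul_le_mul hR hS (norm_nonneg _) (inv_nonneg.mpr hαL.le))
    _ = 1 / 2 * (αU / αL + 1) := by field_simp; ring

end ContinuousLinearMap

open scoped MatrixOrder in
theorem Matrix.toEuclideanCLM_mono {n 𝕜 : Type*} [RCLike 𝕜] [Fintype n] [DecidableEq n] :
    Monotone (toEuclideanCLM (n := n) (𝕜 := 𝕜)) := fun M N hMN => by
  rw [ContinuousLinearMap.le_def, ← map_sub, ← ContinuousLinearMap.isPositive_toLinearMap_iff,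
    coe_toEuclideanCLM_eq_toEuclideanLin, isPositive_toEuclideanLin_iff]
  exact hMN

theorem stmt_6_general {n : ℕ} (A B : Matrix (Fin n) (Fin n) ℝ)
    (hA : A.PosDef) (hB : B.PosDef)
    (αL αU : ℝ) (hαL : 0 < αL) (hαLU : αL ≤ αU)
    (hlow : (B - αL • (1 : Matrix (Fin n) (Fin n) ℝ)).PosSemidef)
    (hup : ((αU • (1 : Matrix (Fin n) (Fin n) ℝ)) - B).PosSemidef) :
    ‖Matrix.toEuclideanCLM (𝕜 := ℝ) (n := Fin n) ((A + B)⁻¹ * (A + ((αL + αU) / 2) • 1))‖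
      ≤ (1 / 2) * (αU / αL + 1) := by
  have hdet : IsUnit (A + B).det := (hA.add hB).det_pos.ne'.isUnit
  have mono := Matrix.toEuclideanCLM_mono (n := Fin n) (𝕜 := ℝ)
  have key := ContinuousLinearMap.norm_mul_add_smul_one_le hαL hαLU
    (R := toEuclideanCLM (𝕜 := ℝ) (A + B)⁻¹)
    (by simpa using mono hA.posSemidef.nonneg) (by simpa using mono hlow) (by simpa using mono hup)
    (by rw [← map_add, ← map_mul, nonsing_inv_mul _ hdet, map_one])
    (by rw [← map_add, ← map_mul, mul_nonsing_inv _ hdet, map_one])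
  simpa using key

/-- For symmetric positive definite `A, B` with `α_L I ⪯ B ⪯ α_U I` and
`ᾱ = (α_L + α_U)/2`, the operator norm of `(A+B)⁻¹(A + ᾱI)` is at most `(1/2)(α_U/α_L + 1)`. -/
theorem stmt_6 {n : ℕ} (A B : Matrix (Fin n) (Fin n) ℝ)
    (hAsym : A.IsSymm) (hBsym : B.IsSymm) (hA : A.PosDef) (hB : B.PosDef)
    (αL αU : ℝ) (hαL : 0 < αL) (hαLU : αL ≤ αU)
    (hlow : (B - αL • (1 : Matrix (Fin n) (Fin n) ℝ)).PosSemidef)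
    (hup : ((αU • (1 : Matrix (Fin n) (Fin n) ℝ)) - B).PosSemidef) :
    ‖Matrix.toEuclideanCLM (𝕜 := ℝ) (n := Fin n) ((A + B)⁻¹ * (A + ((αL + αU) / 2) • 1))‖
      ≤ (1 / 2) * (αU / αL + 1) :=
  stmt_6_general A B hA hB αL αU hαL hαLU hlow hup
end

section
/- Let A : H → ℝ^n be a bounded operator on a Hilbert space H, P a projection with range G⊥, R = A P, C = A (I−P), and suppose R R* ⪰ α_L I_n with α_L > 0 and the operator B = (I_G + C̃*(RR*)⁻¹C̃)⁻¹ exists on G (where C̃ = C restricted to G). Then for any η* ∈ G, ‖(R R* + C C*)⁻¹ C η*‖₂ ≤ (1/α_L) · ‖C‖_{G→ℓ₂} · ‖B η*‖, where ‖C‖_{G→ℓ₂} is the operator norm of C restricted to G. (Bound for the leave-one-out coefficient vector K⁻¹ A η* in terms of the bias.) -/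
/-!
Push-through: `(1 + C* M⁻¹ C) B = 1` gives `(M + C C*) M⁻¹ C B = C`, hence
`K⁻¹ C = M⁻¹ C B` for `M = R R*`, `K = M + C C*`. Coercivity of `M` bounds `‖M⁻¹‖` by `α⁻¹`,
and `C` factors through the orthogonal projection onto `G`, which has norm at most one.
-/

open ContinuousLinearMap RealInnerProductSpace

namespace ContinuousLinearMap

variable {𝕜 V W : Type*} [Semiring 𝕜]
  [TopologicalSpace V] [AddCommMonoid V] [Module 𝕜 V] [ContinuousAdd V]
  [TopologicalSpace W] [AddCommMonoid W] [Module 𝕜 W] [ContinuousAdd W]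

theorem comp_eq_comp_comp_of_push_through {M Minv Kinv : W →L[𝕜] W} {C : V →L[𝕜] W}
    {D : W →L[𝕜] V} {B : V →L[𝕜] V}
    (hK : Kinv ∘L (M + C ∘L D) = 1) (hM : M ∘L Minv = 1) (hB : (1 + D ∘L Minv ∘L C) ∘L B = 1) :
    Kinv ∘L C = Minv ∘L C ∘L B := by
  have hpush : (M + C ∘L D) ∘L (Minv ∘L C ∘L B) = C := by
    calc (M + C ∘L D) ∘L (Minv ∘L C ∘L B)
        = (M ∘L Minv) ∘L C ∘L B + C ∘L (D ∘L Minv ∘L C) ∘L B := by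
          simp only [add_comp, comp_assoc]
      _ = C ∘L ((1 + D ∘L Minv ∘L C) ∘L B) := by
          simp only [hM, add_comp, comp_add, one_def, id_comp, comp_assoc]
      _ = C := by rw [hB, one_def, comp_id]
  calc Kinv ∘L C = Kinv ∘L (M + C ∘L D) ∘L (Minv ∘L C ∘L B) := by rw [hpush]
    _ = Minv ∘L C ∘L B := by rw [← comp_assoc, hK, one_def, id_comp]

end ContinuousLinearMap

section InnerProductSpace

variable {E F : Type*} [NormedAddCommGroup E] [InnerProductSpace ℝ E]
  [NormedAddCommGroup F] [NormedSpace ℝ F]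

theorem mul_norm_le_norm_apply_of_coercive {T : E →L[ℝ] E} {α : ℝ}
    (hT : ∀ x, α * ‖x‖ ^ 2 ≤ ⟪T x, x⟫) (x : E) : α * ‖x‖ ≤ ‖T x‖ := by
  rcases (norm_nonneg x).eq_or_lt with hx | hx
  · simp [← hx]
  · have : α * ‖x‖ * ‖x‖ ≤ ‖T x‖ * ‖x‖ := by
      nlinarith [hT x, real_inner_le_norm (T x) x]
    exact le_of_mul_le_mul_right this hx

theorem norm_apply_le_inv_mul_of_coercive {T S : E →L[ℝ] E} {α : ℝ} (hα : 0 < α)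
    (hT : ∀ x, α * ‖x‖ ^ 2 ≤ ⟪T x, x⟫) (hTS : T ∘L S = 1) (y : E) : ‖S y‖ ≤ α⁻¹ * ‖y‖ := by
  have h := mul_norm_le_norm_apply_of_coercive hT (S y)
  rw [← comp_apply, hTS, one_apply_eq_self] at h
  rwa [← div_eq_inv_mul, le_div_iff₀' hα]

theorem Submodule.norm_apply_le_of_comp_starProjection_eq (K : Submodule ℝ E)
    [K.HasOrthogonalProjection] {T : E →L[ℝ] F} (hT : T ∘L K.starProjection = T) (z : E) :
    ‖T z‖ ≤ ‖T ∘L K.subtypeL‖ * ‖z‖ := by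
  calc ‖T z‖ = ‖(T ∘L K.subtypeL) (K.orthogonalProjectionOnto z)‖ := by
        rw [← congr($hT z)]; rfl
    _ ≤ ‖T ∘L K.subtypeL‖ * ‖K.orthogonalProjectionOnto z‖ := le_opNorm _ _
    _ ≤ ‖T ∘L K.subtypeL‖ * ‖z‖ := by gcongr; exact K.norm_orthogonalProjectionOnto_apply_le z

end InnerProductSpace

theorem stmt_14_general {n : ℕ} {H : Type*} [NormedAddCommGroup H] [InnerProductSpace ℝ H]
    [CompleteSpace H] (G : Submodule ℝ H) [CompleteSpace G]
    (A : H →L[ℝ] EuclideanSpace ℝ (Fin n))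
    (P : H →L[ℝ] H) (hP : P = (Gᗮ).subtypeL ∘L Submodule.orthogonalProjectionOnto Gᗮ)
    (C R : H →L[ℝ] EuclideanSpace ℝ (Fin n))
    (hC : C = A ∘L (1 - P))
    (αL : ℝ) (hαL : 0 < αL)
    (hRRlow : ∀ x : EuclideanSpace ℝ (Fin n), αL * ‖x‖ ^ 2 ≤ ⟪(R ∘L R.adjoint) x, x⟫)
    (RRinv : EuclideanSpace ℝ (Fin n) →L[ℝ] EuclideanSpace ℝ (Fin n))
    (hRR1 : (R ∘L R.adjoint) ∘L RRinv = 1)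
    (Kinv : EuclideanSpace ℝ (Fin n) →L[ℝ] EuclideanSpace ℝ (Fin n))
    (hK2 : Kinv ∘L ((R ∘L R.adjoint) + (C ∘L C.adjoint)) = 1)
    (B : H →L[ℝ] H)
    (hB1 : (1 + C.adjoint ∘L RRinv ∘L C) ∘L B = 1)
    (η : H) :
    ‖Kinv (C η)‖ ≤ (1 / αL) * ‖C ∘L G.subtypeL‖ * ‖B η‖ := by
  have hPG : 1 - P = G.starProjection := by
    rw [hP, ← Submodule.starProjection, Submodule.starProjection_orthogonal', sub_sub_cancel]
  have hCG : C ∘L G.starProjection = C := by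
    rw [hC, hPG, comp_assoc, ← mul_def, G.isIdempotentElem_starProjection.eq]
  have hpush : Kinv (C η) = RRinv (C (B η)) :=
    congr($(comp_eq_comp_comp_of_push_through hK2 hRR1 hB1) η)
  calc ‖Kinv (C η)‖ = ‖RRinv (C (B η))‖ := by rw [hpush]
    _ ≤ αL⁻¹ * ‖C (B η)‖ := norm_apply_le_inv_mul_of_coercive hαL hRRlow hRR1 _
    _ ≤ αL⁻¹ * (‖C ∘L G.subtypeL‖ * ‖B η‖) := by
      gcongr; exact G.norm_apply_le_of_comp_starProjection_eq hCG _
    _ = 1 / αL * ‖C ∘L G.subtypeL‖ * ‖B η‖ := by rw [one_div, mul_assoc]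

/-- For `A : H → ℝⁿ`, `P` the orthogonal projection with range `G⊥`,
`R = AP`, `C = A(I-P)`, with `RR* ⪰ α_L I` (`α_L > 0`) and
`B = (I + C*(RR*)⁻¹C)⁻¹`, we have for any `η* ∈ G` the bound
`‖(RR* + CC*)⁻¹ C η*‖₂ ≤ (1/α_L)·‖C|_G‖·‖Bη*‖`. -/
theorem stmt_14 {n : ℕ} {H : Type*} [NormedAddCommGroup H] [InnerProductSpace ℝ H]
    [CompleteSpace H] (G : Submodule ℝ H) [CompleteSpace G]
    (A : H →L[ℝ] EuclideanSpace ℝ (Fin n))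
    (P : H →L[ℝ] H) (hP : P = (Gᗮ).subtypeL ∘L Submodule.orthogonalProjectionOnto Gᗮ)
    (C R : H →L[ℝ] EuclideanSpace ℝ (Fin n))
    (hR : R = A ∘L P) (hC : C = A ∘L (1 - P))
    (αL : ℝ) (hαL : 0 < αL)
    (hRRlow : ∀ x : EuclideanSpace ℝ (Fin n), αL * ‖x‖ ^ 2 ≤ ⟪(R ∘L R.adjoint) x, x⟫)
    (RRinv : EuclideanSpace ℝ (Fin n) →L[ℝ] EuclideanSpace ℝ (Fin n))
    (hRR1 : (R ∘L R.adjoint) ∘L RRinv = 1) (hRR2 : RRinv ∘L (R ∘L R.adjoint) = 1)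
    (Kinv : EuclideanSpace ℝ (Fin n) →L[ℝ] EuclideanSpace ℝ (Fin n))
    (hK1 : ((R ∘L R.adjoint) + (C ∘L C.adjoint)) ∘L Kinv = 1)
    (hK2 : Kinv ∘L ((R ∘L R.adjoint) + (C ∘L C.adjoint)) = 1)
    (B : H →L[ℝ] H)
    (hB1 : (1 + C.adjoint ∘L RRinv ∘L C) ∘L B = 1)
    (hB2 : B ∘L (1 + C.adjoint ∘L RRinv ∘L C) = 1)
    (η : H) (hη : η ∈ G) :
    ‖Kinv (C η)‖ ≤ (1 / αL) * ‖C ∘L G.subtypeL‖ * ‖B η‖ :=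
  stmt_14_general G A P hP C R hC αL hαL hRRlow RRinv hRR1 Kinv hK2 B hB1 η
end
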